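/- arXiv:1608.07390 — 4 statements merged into one kernel-verified Lean document; each statement's English description precedes it below -/
import Mathlib

section
/- Every connected graph that is not complete has at least two distinct non-adjacent vertices neither of which is a cut vertex. -/
open SimpleGraph

/-- A walk `W` between `u` and `v` is a *tolled walk* if either `u = v` and `W` is trivial,
or `u` and `v` are adjacent and `W` is the single-edge walk, or `u ≠ v` are non-adjacent,
`W` has at least one interior vertex, `u` is adjacent exactly to the interior vertex
at position 1 and `v` exactly to the interior vertex at position `W.length - 1`. -/
def IsTolledWalk {V : Type*} (G : SimpleGraph V) {u v : V} (W : G.Walk u v) : Prop :=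
  (u = v ∧ W.length = 0) ∨
  (G.Adj u v ∧ W.support = [u, v]) ∨
  (¬ G.Adj u v ∧ u ≠ v ∧ 2 ≤ W.length ∧
    (∀ i, 0 < i → i < W.length → (G.Adj u (W.support.getD i u) ↔ i = 1)) ∧
    (∀ i, 0 < i → i < W.length → (G.Adj v (W.support.getD i u) ↔ i = W.length - 1)))

/-- The toll interval between `u` and `v`: vertices lying on some tolled walk. -/
def tollInterval {V : Type*} (G : SimpleGraph V) (u v : V) : Set V :=
  {x | ∃ W : G.Walk u v, IsTolledWalk G W ∧ x ∈ W.support}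

/-- A toll set: the toll intervals between its pairs cover the vertex set. -/
def IsTollSet {V : Type*} (G : SimpleGraph V) (S : Set V) : Prop :=
  ∀ x : V, ∃ u ∈ S, ∃ v ∈ S, x ∈ tollInterval G u v

/-- The toll number: minimum size of a toll set. -/
noncomputable def tollNumber {V : Type*} (G : SimpleGraph V) : ℕ :=
  sInf {n | ∃ S : Set V, S.Finite ∧ S.ncard = n ∧ IsTollSet G S}

/-- `v` is a cut vertex if deleting it disconnects the graph. -/
def IsCutVertex {V : Type*} (G : SimpleGraph V) (v : V) : Prop :=
  ¬ (G.induce {w | w ≠ v}).Preconnected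

/-- The extreme vertices of `G` with respect to toll convexity. -/
def extremeVertices {V : Type*} (G : SimpleGraph V) : Set V :=
  {s | ∀ x y : V, x ≠ s → y ≠ s → s ∉ tollInterval G x y}

/-- The lexicographic product of simple graphs. -/
def lexProd {V W : Type*} (G : SimpleGraph V) (H : SimpleGraph W) : SimpleGraph (V × W) where
  Adj a b := G.Adj a.1 b.1 ∨ (a.1 = b.1 ∧ H.Adj a.2 b.2)
  symm := by
    constructor
    rintro a b (h | ⟨h1, h2⟩)
    · exact Or.inl h.symm
    · exact Or.inr ⟨h1.symm, h2.symm⟩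
  loopless := by
    constructor
    rintro a (h | ⟨_, h⟩)
    · exact G.loopless.irrefl _ h
    · exact H.loopless.irrefl _ h

/- Take two vertices `u`, `v` realising the diameter; since `G` is not complete, the diameter is
at least `2`, so they are distinct and non-adjacent. If deleting `v` separated some `w` from `u`,
every `u`–`w` walk would pass through `v`, so `w` would be strictly farther from `u` than `v` is,
contradicting the maximality of `dist u v`. By symmetry the same holds for `u`. -/

namespace SimpleGraph

variable {V : Type*} {G : SimpleGraph V}

lemma Walk.dist_lt_length_of_mem_support {u v w : V} (p : G.Walk u w) (hv : v ∈ p.support)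
    (hvw : v ≠ w) : G.dist u v < p.length := by
  classical
  exact (dist_le _).trans_lt (p.length_takeUntil_lt_length hv hvw)

lemma not_isCutVertex_of_forall_dist_le (hG : G.Connected) {u v : V} (huv : u ≠ v)
    (hfar : ∀ w, G.dist u w ≤ G.dist u v) : ¬ IsCutVertex G v := by
  have reach_from_u : ∀ w : {w | w ≠ v}, (G.induce {w | w ≠ v}).Reachable ⟨u, huv⟩ w := by
    rintro ⟨w, hwv⟩
    obtain ⟨p, hp⟩ := hG.exists_walk_length_eq_dist u w
    have hvp : v ∉ p.support := fun hvp =>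
      (hfar w).not_gt (hp ▸ p.dist_lt_length_of_mem_support hvp (Ne.symm hwv))
    exact (p.induce {w | w ≠ v} fun x hx hxv => hvp (hxv ▸ hx)).reachable
  exact fun hcut => hcut fun a b => (reach_from_u a).symm.trans (reach_from_u b)

lemma Connected.two_le_diam [Finite V] (hG : G.Connected) (hG_ne_top : G ≠ ⊤) : 2 ≤ G.diam := by
  have : Nontrivial V := by
    by_contra h
    have := not_nontrivial_iff_subsingleton.mp h
    exact hG_ne_top (Subsingleton.elim G ⊤)
  have h0 : G.diam ≠ 0 := connected_iff_diam_ne_zero.mp hG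
  have h1 : G.diam ≠ 1 := mt diam_eq_one.mp hG_ne_top
  omega

end SimpleGraph

theorem stmt0 {V : Type*} [Fintype V] (G : SimpleGraph V)
    (hconn : G.Connected) (hnc : G ≠ ⊤) :
    ∃ u v : V, u ≠ v ∧ ¬ G.Adj u v ∧ ¬ IsCutVertex G u ∧ ¬ IsCutVertex G v := by
  have := hconn.nonempty
  have hfin : G.ediam ≠ ⊤ := connected_iff_ediam_ne_top.mp hconn
  have hdiam : 2 ≤ G.diam := hconn.two_le_diam hnc
  obtain ⟨u, v, huv⟩ := G.exists_dist_eq_diam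
  have hne : u ≠ v := fun h => by simp [h] at huv; omega
  have hnadj : ¬ G.Adj u v := fun h => by rw [dist_eq_one_iff_adj.mpr h] at huv; omega
  have hfar : ∀ a b, G.dist a b ≤ G.dist u v := fun a b => huv ▸ dist_le_diam hfin
  refine ⟨u, v, hne, hnadj, ?_, not_isCutVertex_of_forall_dist_le hconn hne (hfar u)⟩
  exact not_isCutVertex_of_forall_dist_le hconn hne.symm fun w => (hfar v w).trans_eq dist_comm
end

section
/- Let G and H be connected non-complete graphs, let x, y be non-adjacent vertices of G neither of which is a cut vertex, and let u, v be non-adjacent vertices of H neither of which is a cut vertex. Then the toll interval between (x,u) and (y,v) in G □ H is all of V(G □ H). -/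
open SimpleGraph

/-! Write `A = (x, u)` and `B = (y, v)`. A walk `M` from a neighbour of `A` to a neighbour
of `B`, such that `A` is adjacent to no vertex of `M` after its first and `B` to none before
its last, closes up to the tolled walk `A, M, B`. For `(a, b)` with `a ∉ {x, y}`, `M` runs in
the layer `G × {u}` from a neighbour of `x` to `(a, u)`, along the fibre `{a} × H` through
`(a, b)` to `(a, v)`, and in the layer `G × {v}` to a neighbour of `y`; the fibre walk meets
`u` and `v` only at its ends, which is possible because neither is a cut vertex of `H`.
For `(x, b)` with `b ≠ u`, `M` runs in `{x} × H` from a neighbour of `u` to `(x, b)`, steps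
to `(x₀, b)` for a neighbour `x₀` of `x`, goes to `(x₀, v)` inside `{x₀} × H` avoiding `u`,
and continues in `G × {v}`; the vertices `(y, b)` are handled symmetrically, and `A`, `B`
lie on every tolled walk. -/

namespace SimpleGraph

variable {V : Type*} {G : SimpleGraph V}

namespace Walk

theorem dropLast_support_append {a b c : V} (p : G.Walk a b) (q : G.Walk b c) :
    (p.append q).support.dropLast = p.support.dropLast ++ q.support.dropLast := by
  rw [support_append_eq_support_dropLast_append, List.dropLast_append_of_ne_nil (support_ne_nil q)]

@[simp]
theorem tail_support_reverse {a b : V} (p : G.Walk a b) :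
    p.reverse.support.tail = p.support.dropLast.reverse := by
  rw [support_reverse, List.tail_reverse]

@[simp]
theorem dropLast_support_reverse {a b : V} (p : G.Walk a b) :
    p.reverse.support.dropLast = p.support.tail.reverse := by
  rw [support_reverse, List.dropLast_reverse]

theorem IsPath.start_notMem_tail_support {a b : V} {p : G.Walk a b} (hp : p.IsPath) :
    a ∉ p.support.tail := by
  have := hp.support_nodup
  rw [← cons_tail_support] at this
  exact (List.nodup_cons.1 this).1

theorem IsPath.end_notMem_dropLast_support {a b : V} {p : G.Walk a b} (hp : p.IsPath) :
    b ∉ p.support.dropLast := by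
  have := hp.support_nodup
  rw [← dropLast_support_concat] at this
  exact fun h => List.disjoint_of_nodup_append this h (List.mem_singleton_self b)

theorem getD_support_eq_getVert {a b : V} (p : G.Walk a b) {i : ℕ} (hi : i ≤ p.length) (d : V) :
    p.support.getD i d = p.getVert i := by
  rw [getVert_eq_support_getElem p hi, List.getD_eq_getElem]

theorem exists_walk_to_first_neighbor {a t : V} :
    G.Walk a t → a ≠ t →
      ∃ c, G.Adj c t ∧ ∃ q : G.Walk a c, ∀ z ∈ q.support.dropLast, ¬ G.Adj t z
  | nil, hat => absurd rfl hat
  | cons h p, _ => by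
    by_cases hat : G.Adj a t
    · exact ⟨a, hat, nil, by simp⟩
    · obtain ⟨c, hct, q, hq⟩ := exists_walk_to_first_neighbor p (by rintro rfl; exact hat h)
      refine ⟨c, hct, cons h q, ?_⟩
      rw [support_cons, List.dropLast_cons_of_ne_nil (support_ne_nil q)]
      exact List.forall_mem_cons.2 ⟨fun h => hat h.symm, hq⟩

end Walk

theorem exists_isPath_notMem_support_of_not_isCutVertex {s a b : V} (hs : ¬ IsCutVertex G s)
    (ha : a ≠ s) (hb : b ≠ s) : ∃ p : G.Walk a b, p.IsPath ∧ s ∉ p.support := by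
  classical
  obtain ⟨p⟩ := not_not.1 hs ⟨a, ha⟩ ⟨b, hb⟩
  let q : G.Walk a b := p.map (Embedding.induce {w | w ≠ s}).toHom
  refine ⟨q.bypass, q.bypass_isPath, fun hsq => ?_⟩
  obtain ⟨⟨w, hw⟩, -, hws⟩ := List.mem_map.1 <| (Walk.support_map _ p) ▸
    q.support_bypass_subset_support hsq
  exact hw hws

theorem Preconnected.exists_walk_mem_support_of_not_isCutVertex {u v : V} (hG : G.Preconnected)
    (huv : u ≠ v) (hu : ¬ IsCutVertex G u) (hv : ¬ IsCutVertex G v) (b : V) :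
    ∃ q : G.Walk u v, b ∈ q.support ∧ u ∉ q.support.tail ∧ v ∉ q.support.dropLast := by
  classical
  by_cases hb : b = u ∨ b = v
  · obtain ⟨q⟩ := hG u v
    refine ⟨q.bypass, ?_, q.bypass_isPath.start_notMem_tail_support,
      q.bypass_isPath.end_notMem_dropLast_support⟩
    rcases hb with rfl | rfl
    exacts [q.bypass.start_mem_support, q.bypass.end_mem_support]
  · obtain ⟨hbu, hbv⟩ := not_or.1 hb
    obtain ⟨q₁, hq₁, hvq₁⟩ := exists_isPath_notMem_support_of_not_isCutVertex hv hbv huv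
    obtain ⟨q₂, hq₂, huq₂⟩ :=
      exists_isPath_notMem_support_of_not_isCutVertex hu hbu huv.symm
    refine ⟨q₁.reverse.append q₂, by simp, ?_, ?_⟩
    · rw [Walk.tail_support_append]
      simpa using ⟨hq₁.end_notMem_dropLast_support, fun h => huq₂ (List.mem_of_mem_tail h)⟩
    · rw [Walk.dropLast_support_append]
      simpa using ⟨fun h => hvq₁ (List.mem_of_mem_tail h), hq₂.end_notMem_dropLast_support⟩

theorem IsTolledWalk.reverse {a b : V} {p : G.Walk a b} (hp : IsTolledWalk G p) :
    IsTolledWalk G p.reverse := by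
  rcases hp with ⟨rfl, hlen⟩ | ⟨hab, hsupp⟩ | ⟨hab, hne, hlen, ha, hb⟩
  · exact Or.inl ⟨rfl, by simpa using hlen⟩
  · exact Or.inr (Or.inl ⟨hab.symm, by simp [hsupp]⟩)
  · have hrev : ∀ i < p.length,
        p.reverse.support.getD i b = p.support.getD (p.length - i) a := fun i hi => by
      rw [Walk.getD_support_eq_getVert _ (by simp; omega), Walk.getVert_reverse,
        Walk.getD_support_eq_getVert p (by omega)]
    refine Or.inr (Or.inr ⟨fun h => hab h.symm, hne.symm, by simpa using hlen,
      fun i hi0 hi => ?_, fun i hi0 hi => ?_⟩) <;>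
    simp only [Walk.length_reverse] at hi ⊢ <;> rw [hrev i hi]
    · rw [hb (p.length - i) (by omega) (by omega)]; omega
    · rw [ha (p.length - i) (by omega) (by omega)]; omega

theorem tollInterval_subset_symm (a b : V) : tollInterval G a b ⊆ tollInterval G b a :=
  fun _ ⟨p, hp, hz⟩ => ⟨p.reverse, hp.reverse, by simpa using hz⟩

theorem tollInterval_comm (a b : V) : tollInterval G a b = tollInterval G b a :=
  (tollInterval_subset_symm a b).antisymm (tollInterval_subset_symm b a)

theorem left_mem_tollInterval {a b : V} (h : (tollInterval G a b).Nonempty) :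
    a ∈ tollInterval G a b :=
  let ⟨_, p, hp, _⟩ := h
  ⟨p, hp, p.start_mem_support⟩

theorem right_mem_tollInterval {a b : V} (h : (tollInterval G a b).Nonempty) :
    b ∈ tollInterval G a b :=
  let ⟨_, p, hp, _⟩ := h
  ⟨p, hp, p.end_mem_support⟩

theorem isTolledWalk_cons_concat {a b p q : V} (hab : ¬ G.Adj a b) (hne : a ≠ b)
    (hp : G.Adj a p) (M : G.Walk p q) (hq : G.Adj q b)
    (ha : ∀ z ∈ M.support.tail, ¬ G.Adj a z)
    (hb : ∀ z ∈ M.support.dropLast, ¬ G.Adj b z) :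
    IsTolledWalk G (Walk.cons hp (M.concat hq)) := by
  have hlen : M.support.length = M.length + 1 := M.length_support
  have hget : ∀ j (hj : j ≤ M.length),
      (Walk.cons hp (M.concat hq)).support.getD (j + 1) a = M.support[j] := fun j hj => by
    simp [Walk.support_concat, List.getD_eq_getElem?_getD,
      List.getElem?_append_left (by omega : j < M.support.length),
      List.getElem?_eq_getElem (by omega : j < M.support.length)]
  refine Or.inr (Or.inr ⟨hab, hne, by simp, fun i hi0 hi => ?_, fun i hi0 hi => ?_⟩) <;>
  obtain ⟨j, rfl⟩ := Nat.exists_eq_add_one_of_ne_zero hi0.ne' <;>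
  simp only [Walk.length_cons, Walk.length_concat] at hi ⊢ <;>
  rw [hget j (by omega)]
  · rcases j with _ | j
    · simpa [Walk.support_getElem_zero] using hp
    · have hmem : M.support[j + 1] ∈ M.support.tail := by
        rw [← List.getElem_tail (by simp; omega)]; exact List.getElem_mem _
      simp [ha _ hmem]
  · rcases (show j < M.length ∨ j = M.length by omega) with hj | rfl
    · have hmem : M.support[j] ∈ M.support.dropLast := by
        rw [← List.getElem_dropLast (by simp; omega)]; exact List.getElem_mem _
      simp only [hb _ hmem, false_iff]; omega
    · simpa [Walk.support_getElem_length] using hq.symm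

theorem mem_tollInterval_of_walk {a b p q : V} (hab : ¬ G.Adj a b) (hne : a ≠ b)
    (hp : G.Adj a p) (M : G.Walk p q) (hq : G.Adj q b)
    (ha : ∀ z ∈ M.support.tail, ¬ G.Adj a z) (hb : ∀ z ∈ M.support.dropLast, ¬ G.Adj b z)
    {z : V} (hz : z ∈ M.support) : z ∈ tollInterval G a b :=
  ⟨_, isTolledWalk_cons_concat hab hne hp M hq ha hb, by simp [Walk.support_concat, hz]⟩

section BoxProd

variable {W : Type*} {H : SimpleGraph W}

@[simp]
theorem Walk.support_boxProdLeft (b : W) {a₁ a₂ : V} (p : G.Walk a₁ a₂) :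
    (p.boxProdLeft H b).support = p.support.map (·, b) :=
  Walk.support_map _ p

@[simp]
theorem Walk.support_boxProdRight (a : V) {b₁ b₂ : W} (q : H.Walk b₁ b₂) :
    (q.boxProdRight G a).support = q.support.map (a, ·) :=
  Walk.support_map _ q

theorem mem_tollInterval_boxProd_of_fst_ne (hG : G.Preconnected) {x y a : V} {u v b : W}
    (huv : u ≠ v) (huv' : ¬ H.Adj u v) (hax : a ≠ x) (hay : a ≠ y) (q : H.Walk u v)
    (hqu : u ∉ q.support.tail) (hqv : v ∉ q.support.dropLast) (hb : b ∈ q.support) :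
    (a, b) ∈ tollInterval (G □ H) (x, u) (y, v) := by
  obtain ⟨c, hcx, p, hp⟩ := (hG a x).some.exists_walk_to_first_neighbor hax
  obtain ⟨d, hdy, r, hr⟩ := (hG a y).some.exists_walk_to_first_neighbor hay
  refine mem_tollInterval_of_walk (by simp [huv, huv']) (by simp [huv]) (p := (c, u))
    (by simpa using hcx.symm)
    ((p.reverse.boxProdLeft H u).append ((q.boxProdRight G a).append (r.boxProdLeft H v)))
    (q := (d, v)) (by simpa using hdy) ?_ ?_ ?_
  · simp only [Walk.tail_support_append, Walk.support_boxProdLeft, Walk.support_boxProdRight,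
      ← List.map_tail, Walk.tail_support_reverse, List.forall_mem_append, List.forall_mem_map,
      List.mem_reverse, boxProd_adj]
    refine ⟨fun g hg => ?_, fun w hw => ?_, fun g _ => ?_⟩
    · simp [hp g hg]
    · simp [hax.symm, (ne_of_mem_of_not_mem hw hqu).symm]
    · simp [huv, huv']
  · simp only [Walk.dropLast_support_append, Walk.support_boxProdLeft, Walk.support_boxProdRight,
      ← List.map_dropLast, Walk.dropLast_support_reverse, List.forall_mem_append,
      List.forall_mem_map, List.mem_reverse, boxProd_adj]
    refine ⟨fun g _ => ?_, fun w hw => ?_, fun g hg => ?_⟩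
    · simp [huv.symm, H.adj_comm v u, huv']
    · simp [hay.symm, (ne_of_mem_of_not_mem hw hqv).symm]
    · simp [hr g hg]
  · simp [hb]

theorem mem_tollInterval_boxProd_of_fst_eq (hG : G.Preconnected) (hH : H.Preconnected)
    {x y : V} {u v b : W} (hxy : x ≠ y) (hxy' : ¬ G.Adj x y) (huv : u ≠ v)
    (huv' : ¬ H.Adj u v) (hu : ¬ IsCutVertex H u) (hbu : b ≠ u) :
    (x, b) ∈ tollInterval (G □ H) (x, u) (y, v) := by
  obtain ⟨x₀, hx₀⟩ : ∃ x₀, G.Adj x x₀ :=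
    let ⟨p⟩ := hG x y
    ⟨p.snd, p.adj_snd fun h => hxy h.eq⟩
  have hx₀y : x₀ ≠ y := by rintro rfl; exact hxy' hx₀
  obtain ⟨c, hcu, q₁, hq₁⟩ := (hH b u).some.exists_walk_to_first_neighbor hbu
  obtain ⟨q₂, hq₂, huq₂⟩ :=
    exists_isPath_notMem_support_of_not_isCutVertex hu hbu huv.symm
  obtain ⟨d, hdy, r, hr⟩ := (hG x₀ y).some.exists_walk_to_first_neighbor hx₀y
  refine mem_tollInterval_of_walk (by simp [huv, huv']) (by simp [huv]) (p := (x, c))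
    (by simpa using hcu.symm)
    ((q₁.reverse.boxProdRight G x).append (Walk.cons (boxProd_adj_left.2 hx₀)
      ((q₂.boxProdRight G x₀).append (r.boxProdLeft H v))))
    (q := (d, v)) (by simpa using hdy) ?_ ?_ ?_
  · rw [Walk.tail_support_append, Walk.support_cons, List.tail_cons, Walk.support_append]
    simp only [Walk.support_boxProdLeft, Walk.support_boxProdRight, ← List.map_tail,
      Walk.tail_support_reverse, List.forall_mem_append, List.forall_mem_map,
      List.mem_reverse, boxProd_adj]
    refine ⟨fun w hw => ?_, fun w hw => ?_, fun g _ => ?_⟩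
    · simp [hq₁ w hw]
    · simp [hx₀.ne, (ne_of_mem_of_not_mem hw huq₂).symm]
    · simp [huv, huv']
  · simp only [Walk.dropLast_support_append, Walk.support_cons,
      List.dropLast_cons_of_ne_nil (Walk.support_ne_nil _), Walk.support_boxProdLeft,
      Walk.support_boxProdRight, ← List.map_dropLast, Walk.dropLast_support_reverse,
      List.forall_mem_cons, List.forall_mem_append, List.forall_mem_map, List.mem_reverse,
      boxProd_adj]
    refine ⟨fun w _ => ?_, ?_, fun w hw => ?_, fun g hg => ?_⟩
    · simp [hxy.symm, G.adj_comm y x, hxy']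
    · simp [hxy.symm, G.adj_comm y x, hxy']
    · simp [hx₀y.symm, (ne_of_mem_of_not_mem hw hq₂.end_notMem_dropLast_support).symm]
    · simp [hr g hg]
  · simp

end BoxProd

end SimpleGraph

theorem stmt5_general {V W : Type*}
    (G : SimpleGraph V) (H : SimpleGraph W)
    (hGc : G.Connected) (hHc : H.Connected)
    (x y : V) (u v : W)
    (hxy : x ≠ y) (hxyadj : ¬ G.Adj x y)
    (huv : u ≠ v) (huvadj : ¬ H.Adj u v) (hu : ¬ IsCutVertex H u) (hv : ¬ IsCutVertex H v) :
    tollInterval (G □ H) (x, u) (y, v) = Set.univ := by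
  have hG := hGc.preconnected
  have hH := hHc.preconnected
  have hleft : ∀ b, b ≠ u → (x, b) ∈ tollInterval (G □ H) (x, u) (y, v) := fun b hbu =>
    mem_tollInterval_boxProd_of_fst_eq hG hH hxy hxyadj huv huvadj hu hbu
  have hright : ∀ b, b ≠ v → (y, b) ∈ tollInterval (G □ H) (x, u) (y, v) := fun b hbv =>
    tollInterval_comm (G := G □ H) (y, v) (x, u) ▸ mem_tollInterval_boxProd_of_fst_eq hG hH
      hxy.symm (fun h => hxyadj h.symm) huv.symm (fun h => huvadj h.symm) hv hbv
  refine Set.eq_univ_of_forall fun ⟨a, b⟩ => ?_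
  rcases eq_or_ne a x with rfl | hax
  · rcases eq_or_ne b u with rfl | hbu
    exacts [left_mem_tollInterval ⟨_, hleft v huv.symm⟩, hleft b hbu]
  rcases eq_or_ne a y with rfl | hay
  · rcases eq_or_ne b v with rfl | hbv
    exacts [right_mem_tollInterval ⟨_, hright u huv⟩, hright b hbv]
  obtain ⟨q, hbq, hqu, hqv⟩ := hH.exists_walk_mem_support_of_not_isCutVertex huv hu hv b
  exact mem_tollInterval_boxProd_of_fst_ne hG huv huvadj hax hay q hqu hqv hbq

theorem stmt5 {V W : Type*} [Fintype V] [Fintype W]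
    (G : SimpleGraph V) (H : SimpleGraph W)
    (hGc : G.Connected) (hHc : H.Connected) (hG : G ≠ ⊤) (hH : H ≠ ⊤)
    (x y : V) (u v : W)
    (hxy : x ≠ y) (hxyadj : ¬ G.Adj x y) (hx : ¬ IsCutVertex G x) (hy : ¬ IsCutVertex G y)
    (huv : u ≠ v) (huvadj : ¬ H.Adj u v) (hu : ¬ IsCutVertex H u) (hv : ¬ IsCutVertex H v) :
    tollInterval (G □ H) (x, u) (y, v) = Set.univ :=
  stmt5_general G H hGc hHc x y u v hxy hxyadj huv huvadj hu hv
end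

section
/- If G is a non-trivial extreme complete graph (i.e., |Ext(G)| = tn(G)), then tn(G ∘ K_n) = n · tn(G). -/
open SimpleGraph

/-!
An extreme vertex `g` of `G` gives extreme vertices `(g, b)` of `G ∘ Kₙ`. A tolled walk between
non-adjacent vertices `x, y` of `G ∘ Kₙ` meets the fiber of `x` only in `x` (all vertices of that
fiber are twins of `x`, and `x` has no neighbour beyond the second vertex of the walk), and
deleting its steps inside fibers projects it to a tolled walk of `G` from `x.1` to `y.1`.
Hence `n · |Ext G| ≤ |Ext (G ∘ Kₙ)| ≤ tn (G ∘ Kₙ)`, while `S × V(Kₙ)` is a toll set of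
`G ∘ Kₙ` for every toll set `S` of `G`, so `tn (G ∘ Kₙ) ≤ n · tn G`.
-/

namespace SimpleGraph.Walk

variable {V : Type*} {G : SimpleGraph V} {u v : V}

lemma support_getD_eq_getVert (W : G.Walk u v) {i : ℕ} (hi : i ≤ W.length) (d : V) :
    W.support.getD i d = W.getVert i := by
  rw [List.getD_eq_getElem _ _ (by rw [length_support]; omega), support_getElem_eq_getVert]

lemma mem_support_drop_iff (W : G.Walk u v) {k : ℕ} {z : V} :
    z ∈ W.support.drop k ↔ ∃ i, k ≤ i ∧ i ≤ W.length ∧ W.getVert i = z := by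
  simp only [List.mem_iff_getElem, List.getElem_drop, support_getElem_eq_getVert,
    List.length_drop, length_support]
  constructor
  · rintro ⟨j, hj, rfl⟩
    exact ⟨k + j, by omega, by omega, rfl⟩
  · rintro ⟨i, hki, hi, rfl⟩
    exact ⟨i - k, by omega, by rw [Nat.add_sub_cancel' hki]⟩

lemma start_notMem_support_drop_two (W : G.Walk u v) (huv : u ≠ v)
    (h : ∀ z ∈ W.support.drop 2, ¬ G.Adj u z) : u ∉ W.support.drop 2 := by
  rw [mem_support_drop_iff]
  rintro ⟨i, hi2, hi, hu⟩
  have hlt : i < W.length := by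
    refine lt_of_le_of_ne hi ?_
    rintro rfl
    exact huv (hu.symm.trans W.getVert_length)
  have hadj := W.adj_getVert_succ hlt
  rw [hu] at hadj
  exact h _ (W.mem_support_drop_iff.2 ⟨i + 1, by omega, hlt, rfl⟩) hadj

lemma forall_adj_getD_iff_eq_one_iff (W : G.Walk u v) (hlen : 2 ≤ W.length)
    (hadj : ¬ G.Adj u v) :
    (∀ i, 0 < i → i < W.length → (G.Adj u (W.support.getD i u) ↔ i = 1)) ↔
      ∀ z ∈ W.support.drop 2, ¬ G.Adj u z := by
  simp only [W.mem_support_drop_iff]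
  constructor
  · rintro h z ⟨i, hi2, hi, rfl⟩
    rcases hi.lt_or_eq with hlt | rfl
    · rw [← W.support_getD_eq_getVert hi u, h i (by omega) hlt]
      omega
    · rwa [getVert_length]
  · intro h i hi0 hi
    rw [W.support_getD_eq_getVert hi.le]
    rcases (show i = 1 ∨ 2 ≤ i by omega) with rfl | hi2
    · exact iff_of_true (by simpa using W.adj_getVert_succ (i := 0) (by omega)) rfl
    · exact iff_of_false (h _ ⟨i, hi2, hi.le, rfl⟩) (by omega)

lemma forall_adj_getD_iff_eq_length_sub_one_iff (W : G.Walk u v) (hlen : 2 ≤ W.length)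
    (hadj : ¬ G.Adj u v) :
    (∀ i, 0 < i → i < W.length → (G.Adj v (W.support.getD i u) ↔ i = W.length - 1)) ↔
      ∀ z ∈ W.reverse.support.drop 2, ¬ G.Adj v z := by
  simp only [W.reverse.mem_support_drop_iff, length_reverse, getVert_reverse]
  constructor
  · rintro h z ⟨i, hi2, hi, rfl⟩
    rcases hi.lt_or_eq with hlt | rfl
    · rw [← W.support_getD_eq_getVert (by omega) u, h _ (by omega) (by omega)]
      omega
    · rw [Nat.sub_self, getVert_zero]
      exact fun h => hadj h.symm
  · intro h i hi0 hi
    rw [W.support_getD_eq_getVert hi.le]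
    rcases (show i = W.length - 1 ∨ i + 2 ≤ W.length by omega) with rfl | hi2
    · refine iff_of_true ?_ rfl
      simpa [Nat.sub_add_cancel (by omega : 1 ≤ W.length)] using
        (W.adj_getVert_succ (i := W.length - 1) (by omega)).symm
    · exact iff_of_false (h _ ⟨W.length - i, by omega, by omega, by rw [Nat.sub_sub_self hi.le]⟩)
        (by omega)

end SimpleGraph.Walk

open SimpleGraph.Walk

section TolledWalk

variable {V : Type*} {G : SimpleGraph V} {u v : V}

theorem isTolledWalk_iff_of_not_adj (W : G.Walk u v) (huv : u ≠ v) (hadj : ¬ G.Adj u v) :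
    IsTolledWalk G W ↔
      (∀ z ∈ W.support.drop 2, ¬ G.Adj u z) ∧ ∀ z ∈ W.reverse.support.drop 2, ¬ G.Adj v z := by
  have hlen : 2 ≤ W.length := by
    by_contra! h
    obtain h | h : W.length = 0 ∨ W.length = 1 := by omega
    · exact huv (W.eq_of_length_eq_zero h)
    · exact hadj (W.adj_of_length_eq_one h)
  rw [← W.forall_adj_getD_iff_eq_one_iff hlen hadj,
    ← W.forall_adj_getD_iff_eq_length_sub_one_iff hlen hadj]
  simp only [IsTolledWalk, huv, hadj, false_and, false_or, not_false_eq_true, ne_eq,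
    true_and, hlen]

theorem IsTolledWalk.reverse {W : G.Walk u v} (hW : IsTolledWalk G W) :
    IsTolledWalk G W.reverse := by
  rcases hW with ⟨rfl, hl⟩ | ⟨hadj, hsup⟩ | ⟨hadj, huv, hrest⟩
  · exact Or.inl ⟨rfl, by rwa [length_reverse]⟩
  · exact Or.inr (Or.inl ⟨hadj.symm, by rw [support_reverse, hsup]; rfl⟩)
  · rw [isTolledWalk_iff_of_not_adj _ huv.symm (fun h => hadj h.symm), reverse_reverse]
    exact ((isTolledWalk_iff_of_not_adj W huv hadj).1 (Or.inr (Or.inr ⟨hadj, huv, hrest⟩))).symm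

theorem IsTolledWalk.ne_and_not_adj {W : G.Walk u v} (hW : IsTolledWalk G W) {z : V}
    (hz : z ∈ W.support) (hzu : z ≠ u) (hzv : z ≠ v) : u ≠ v ∧ ¬ G.Adj u v := by
  rcases hW with ⟨rfl, hl⟩ | ⟨-, hsup⟩ | ⟨hadj, huv, -⟩
  · rw [(W.length_eq_zero_iff.1 hl).eq_nil, support_nil, List.mem_singleton] at hz
    exact absurd hz hzu
  · rw [hsup] at hz
    simp_all
  · exact ⟨huv, hadj⟩

end TolledWalk

section LexProd

variable {V β : Type*} {G : SimpleGraph V} {H : SimpleGraph β}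

lemma lexProd_top_adj {a b : V × β} :
    (lexProd G (⊤ : SimpleGraph β)).Adj a b ↔ G.Adj a.1 b.1 ∨ (a.1 = b.1 ∧ a ≠ b) := by
  change G.Adj a.1 b.1 ∨ (a.1 = b.1 ∧ a.2 ≠ b.2) ↔ _
  simp only [Ne, Prod.ext_iff]
  tauto

def lexProdLeft (G : SimpleGraph V) (H : SimpleGraph β) (b : β) : G ↪g lexProd G H where
  toFun v := (v, b)
  inj' _ _ h := congrArg Prod.fst h
  map_rel_iff' {_ _} := or_iff_left fun h => H.loopless.irrefl b h.2

open Classical in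
noncomputable def SimpleGraph.Walk.projFst :
    {p q : V × β} → (lexProd G H).Walk p q → G.Walk p.1 q.1
  | _, _, .nil => .nil
  | p, _, .cons (v := r) h W =>
    if hA : G.Adj p.1 r.1 then .cons hA W.projFst
    else W.projFst.copy (h.resolve_left hA).1.symm rfl

lemma SimpleGraph.Walk.support_projFst_sublist {p q : V × β} (W : (lexProd G H).Walk p q) :
    W.projFst.support.Sublist (W.support.map Prod.fst) := by
  induction W with
  | nil => simp [projFst]
  | @cons p r q h W ih =>
    unfold projFst
    split_ifs
    · simpa using ih.cons_cons p.1
    · simpa using ih.cons p.1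

lemma SimpleGraph.Walk.fst_mem_support_projFst {p q : V × β} (W : (lexProd G H).Walk p q)
    {z : V × β} (hz : z ∈ W.support) : z.1 ∈ W.projFst.support := by
  induction W with
  | nil =>
    rw [support_nil, List.mem_singleton] at hz
    simp [projFst, hz]
  | @cons p r q h W ih =>
    unfold projFst
    rw [support_cons, List.mem_cons] at hz
    split_ifs with hA
    · rcases hz with rfl | hz
      · exact start_mem_support _
      · exact List.mem_cons_of_mem _ (ih hz)
    · rw [support_copy]
      rcases hz with rfl | hz
      · rw [(h.resolve_left hA).1]
        exact start_mem_support _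
      · exact ih hz

theorem IsTolledWalk.projFst {p q : V × β} {W : (lexProd G H).Walk p q}
    (hW : IsTolledWalk (lexProd G H) W) (hne : p.1 ≠ q.1) (hadj : ¬ G.Adj p.1 q.1) :
    IsTolledWalk G W.projFst := by
  have hadj' : ¬ (lexProd G H).Adj p q := by
    rintro (h | ⟨h, -⟩)
    exacts [hadj h, hne h]
  obtain ⟨hp, hq⟩ :=
    (isTolledWalk_iff_of_not_adj W (fun h => hne (congrArg Prod.fst h)) hadj').1 hW
  have project : ∀ (a : V × β) (l : List V) (L : List (V × β)), l.Sublist (L.map Prod.fst) →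
      (∀ z ∈ L.drop 2, ¬ (lexProd G H).Adj a z) → ∀ z ∈ l.drop 2, ¬ G.Adj a.1 z := by
    intro a l L hl hL z hz
    have hz' := (hl.drop 2).subset hz
    rw [← List.map_drop] at hz'
    obtain ⟨m, hm, rfl⟩ := List.mem_map.1 hz'
    exact fun h => hL m hm (Or.inl h)
  refine (isTolledWalk_iff_of_not_adj _ hne hadj).2
    ⟨project p _ _ W.support_projFst_sublist hp, ?_⟩
  rw [support_reverse]
  refine project q _ W.reverse.support ?_ hq
  simpa [← List.map_reverse] using W.support_projFst_sublist.reverse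

theorem IsTolledWalk.eq_of_fst_eq {p q : V × β} {W : (lexProd G ⊤).Walk p q}
    (hW : IsTolledWalk (lexProd G ⊤) W) (hne : p.1 ≠ q.1) (hadj : ¬ (lexProd G ⊤).Adj p q)
    {x : V × β} (hx : x ∈ W.support) (hx1 : x.1 = p.1) : x = p := by
  have hpq : p ≠ q := fun h => hne (congrArg Prod.fst h)
  have hp := ((isTolledWalk_iff_of_not_adj W hpq hadj).1 hW).1
  by_contra hxp
  obtain ⟨i, rfl, hi⟩ := W.mem_support_iff_exists_getVert.1 hx
  have hi0 : i ≠ 0 := by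
    rintro rfl
    exact hxp W.getVert_zero
  have hlt : i < W.length := by
    refine lt_of_le_of_ne hi ?_
    rintro rfl
    exact hne (hx1 ▸ congrArg Prod.fst W.getVert_length)
  -- the successor of `x` lies beyond the second vertex, yet is a neighbour of the twin `p` of `x`
  have hy : W.getVert (i + 1) ∈ W.support.drop 2 :=
    W.mem_support_drop_iff.2 ⟨i + 1, by omega, hlt, rfl⟩
  refine hp _ hy (lexProd_top_adj.2 ?_)
  rcases lexProd_top_adj.1 (W.adj_getVert_succ hlt) with h | ⟨h, -⟩
  · exact Or.inl (hx1 ▸ h)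
  · exact Or.inr
      ⟨hx1 ▸ h, (ne_of_mem_of_not_mem hy (W.start_notMem_support_drop_two hpq hp)).symm⟩

theorem prod_univ_subset_extremeVertices_lexProd (G : SimpleGraph V) :
    extremeVertices G ×ˢ (Set.univ : Set β) ⊆ extremeVertices (lexProd G (⊤ : SimpleGraph β)) := by
  rintro ⟨g, b⟩ ⟨hg, -⟩ x y hx hy ⟨W, hW, hmem⟩
  obtain ⟨hxy, hadj⟩ := hW.ne_and_not_adj hmem (Ne.symm hx) (Ne.symm hy)
  have hxy1 : x.1 ≠ y.1 := fun h => hadj (lexProd_top_adj.2 (Or.inr ⟨h, hxy⟩))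
  have hgx : x.1 ≠ g := fun h => hx (hW.eq_of_fst_eq hxy1 hadj hmem h.symm).symm
  have hgy : y.1 ≠ g := fun h =>
    hy (hW.reverse.eq_of_fst_eq hxy1.symm (fun h' => hadj h'.symm) (by simpa using hmem)
      h.symm).symm
  exact hg x.1 y.1 hgx hgy
    ⟨W.projFst, hW.projFst hxy1 fun h => hadj (Or.inl h), W.fst_mem_support_projFst hmem⟩

end LexProd

section TollNumber

variable {V β : Type*} {G : SimpleGraph V}

lemma self_mem_tollInterval (G : SimpleGraph V) (x : V) : x ∈ tollInterval G x x :=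
  ⟨Walk.nil, Or.inl ⟨rfl, rfl⟩, by simp⟩

lemma isTollSet_univ (G : SimpleGraph V) : IsTollSet G Set.univ :=
  fun x => ⟨x, trivial, x, trivial, self_mem_tollInterval G x⟩

lemma exists_isTollSet_ncard_eq_tollNumber [Finite V] (G : SimpleGraph V) :
    ∃ S : Set V, S.Finite ∧ S.ncard = tollNumber G ∧ IsTollSet G S :=
  Nat.sInf_mem (s := {n | ∃ S : Set V, S.Finite ∧ S.ncard = n ∧ IsTollSet G S})
    ⟨_, Set.univ, Set.toFinite _, rfl, isTollSet_univ G⟩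

lemma tollNumber_le_ncard {S : Set V} (hS : S.Finite) (hT : IsTollSet G S) :
    tollNumber G ≤ S.ncard :=
  Nat.sInf_le ⟨S, hS, rfl, hT⟩

lemma IsTollSet.extremeVertices_subset {S : Set V} (hS : IsTollSet G S) :
    extremeVertices G ⊆ S := by
  intro s hs
  obtain ⟨u, hu, v, hv, hmem⟩ := hS s
  by_contra hsS
  exact hs u v (ne_of_mem_of_not_mem hu hsS) (ne_of_mem_of_not_mem hv hsS) hmem

lemma ncard_extremeVertices_le_tollNumber [Finite V] (G : SimpleGraph V) :
    (extremeVertices G).ncard ≤ tollNumber G := by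
  obtain ⟨S, hS, hcard, hT⟩ := exists_isTollSet_ncard_eq_tollNumber G
  exact hcard ▸ Set.ncard_le_ncard hT.extremeVertices_subset hS

theorem IsTolledWalk.map {V' : Type*} {G' : SimpleGraph V'} (f : G ↪g G') {u v : V}
    {W : G.Walk u v} (hW : IsTolledWalk G W) : IsTolledWalk G' (W.map f.toHom) := by
  have hsupp : (W.map f.toHom).support = W.support.map f := Walk.support_map _ _
  rcases hW with ⟨rfl, hl⟩ | ⟨hadj, hsup⟩ | ⟨hadj, huv, hlen, hu, hv⟩
  · exact Or.inl ⟨rfl, by rwa [length_map]⟩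
  · exact Or.inr (Or.inl ⟨f.map_adj_iff.2 hadj, by rw [hsupp, hsup]; rfl⟩)
  · refine Or.inr (Or.inr ⟨mt f.map_adj_iff.1 hadj, f.injective.ne huv, ?_, ?_, ?_⟩) <;>
      simp only [length_map, hsupp, Embedding.coe_toHom, List.getD_map, Embedding.map_adj_iff]
    exacts [hlen, hu, hv]

lemma IsTollSet.prod_univ {S : Set V} (hS : IsTollSet G S) (H : SimpleGraph β) :
    IsTollSet (lexProd G H) (S ×ˢ Set.univ) := by
  rintro ⟨x, b⟩
  obtain ⟨u, hu, v, hv, W, hW, hx⟩ := hS x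
  refine ⟨(u, b), ⟨hu, trivial⟩, (v, b), ⟨hv, trivial⟩, W.map (lexProdLeft G H b).toHom,
    hW.map _, ?_⟩
  have hmem := List.mem_map_of_mem (f := lexProdLeft G H b) hx
  rwa [← Embedding.coe_toHom, ← Walk.support_map] at hmem

lemma tollNumber_lexProd_le [Finite V] [Finite β] (G : SimpleGraph V) (H : SimpleGraph β) :
    tollNumber (lexProd G H) ≤ tollNumber G * Nat.card β := by
  obtain ⟨S, hS, hcard, hT⟩ := exists_isTollSet_ncard_eq_tollNumber G
  calc tollNumber (lexProd G H) ≤ (S ×ˢ (Set.univ : Set β)).ncard :=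
        tollNumber_le_ncard (Set.toFinite _) (hT.prod_univ H)
    _ = tollNumber G * Nat.card β := by rw [Set.ncard_prod, Set.ncard_univ, hcard]

lemma ncard_extremeVertices_mul_card_le_tollNumber_lexProd [Finite V] [Finite β]
    (G : SimpleGraph V) :
    (extremeVertices G).ncard * Nat.card β ≤ tollNumber (lexProd G (⊤ : SimpleGraph β)) :=
  calc (extremeVertices G).ncard * Nat.card β
      = (extremeVertices G ×ˢ (Set.univ : Set β)).ncard := by rw [Set.ncard_prod, Set.ncard_univ]
    _ ≤ (extremeVertices (lexProd G (⊤ : SimpleGraph β))).ncard :=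
        Set.ncard_le_ncard (prod_univ_subset_extremeVertices_lexProd G) (Set.toFinite _)
    _ ≤ tollNumber (lexProd G (⊤ : SimpleGraph β)) := ncard_extremeVertices_le_tollNumber _

end TollNumber

theorem stmt9_general {V : Type*} [Fintype V] (G : SimpleGraph V)
    (hext : (extremeVertices G).ncard = tollNumber G) (n : ℕ) :
    tollNumber (lexProd G (⊤ : SimpleGraph (Fin n))) = n * tollNumber G := by
  have hupper := tollNumber_lexProd_le G (⊤ : SimpleGraph (Fin n))
  have hlower := ncard_extremeVertices_mul_card_le_tollNumber_lexProd (β := Fin n) G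
  rw [Nat.card_fin] at hupper hlower
  rw [hext] at hlower
  rw [mul_comm]
  exact le_antisymm hupper hlower

theorem stmt9 {V : Type*} [Fintype V] [Nontrivial V] (G : SimpleGraph V)
    (hext : (extremeVertices G).ncard = tollNumber G) (n : ℕ) :
    tollNumber (lexProd G (⊤ : SimpleGraph (Fin n))) = n * tollNumber G :=
  stmt9_general G hext n
end

section
/- Let G and H be connected non-trivial graphs with H not complete. If tn(G ∘ H) = 3 · tn(G), then for every minimum toll set D of G and any two distinct u, v ∈ D, N_G(u) ∩ N_G(v) = ∅. -/
open SimpleGraph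

/-!
If `D` is a toll set of `G`, every vertex of `D` has a neighbour in `M`, and `p, q` are distinct
non-adjacent vertices of `H`, then `D × {p} ∪ M × {p, q}` is a toll set of `G ∘ H`. A vertex
`(x, y)` with `x ∈ D` is the middle vertex of the tolled path `(z, p) (x, y) (z, q)` for a
neighbour `z ∈ M` of `x`. A vertex `(x, y)` with `x ∉ D` lies on a tolled walk of `G` between
`a, b ∈ D`, and the section `z ↦ (z, c z)` with `c x = y` and `c = p` elsewhere is an induced
embedding of `G`, so it carries that walk to a tolled walk from `(a, p)` to `(b, p)`.
If two vertices of a minimum toll set `D` had a common neighbour, one `M` could serve both, so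
`|M| ≤ |D| - 1` and `tn(G ∘ H) ≤ 3 tn(G) - 2`.
-/

namespace SimpleGraph

variable {V V' : Type*} {G : SimpleGraph V} {G' : SimpleGraph V'}

theorem tollNumber_le_ncard {S : Set V} (hS : S.Finite) (hT : IsTollSet G S) :
    tollNumber G ≤ S.ncard :=
  Nat.sInf_le ⟨S, hS, rfl, hT⟩

theorem mem_tollInterval_of_adj_of_adj {a b x : V} (hax : G.Adj a x) (hxb : G.Adj x b)
    (hab : a ≠ b) (hnab : ¬G.Adj a b) : x ∈ tollInterval G a b := by
  refine ⟨.cons hax (.cons hxb .nil), .inr (.inr ⟨hnab, hab, by simp, ?_, ?_⟩), by simp⟩ <;>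
  · intro i hi₀ hi₂
    obtain rfl : i = 1 := by simp at hi₂; omega
    simp [hax, hxb.symm]

theorem IsTolledWalk.map (f : G ↪g G') {a b : V} {W : G.Walk a b} (hW : IsTolledWalk G W) :
    IsTolledWalk G' (W.map f.toHom) := by
  have hget (i : ℕ) :
      (W.map f.toHom).support.getD i (f.toHom a) = f.toHom (W.support.getD i a) := by
    rw [Walk.support_map]; exact List.getD_map _ _ _
  rcases hW with ⟨rfl, hlen⟩ | ⟨hadj, hsupp⟩ | ⟨hnadj, hne, hlen, ha, hb⟩
  · exact .inl ⟨rfl, by simpa using hlen⟩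
  · exact .inr (.inl ⟨f.map_adj_iff.mpr hadj, by simp [Walk.support_map, hsupp]⟩)
  · refine .inr (.inr ⟨mt f.map_adj_iff.mp hnadj, f.injective.ne hne, by simpa using hlen,
      fun i hi₀ hi => ?_, fun i hi₀ hi => ?_⟩)
    · rw [Walk.length_map] at hi
      rw [hget]; exact f.map_adj_iff.trans (ha i hi₀ hi)
    · rw [Walk.length_map] at hi ⊢
      rw [hget]; exact f.map_adj_iff.trans (hb i hi₀ hi)

theorem Embedding.image_tollInterval_subset (f : G ↪g G') (a b : V) :
    f '' tollInterval G a b ⊆ tollInterval G' (f a) (f b) := by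
  rintro _ ⟨x, ⟨W, hW, hx⟩, rfl⟩
  exact ⟨W.map f.toHom, hW.map f, by simpa [Walk.support_map] using hx⟩

variable {W : Type*} {H : SimpleGraph W}

def lexProdSection (c : V → W) : G ↪g lexProd G H where
  toFun x := (x, c x)
  inj' _ _ h := congrArg Prod.fst h
  map_rel_iff' {x y} := by
    refine ⟨?_, Or.inl⟩
    rintro (h | ⟨h, hc⟩)
    · exact h
    · cases (h : x = y)
      exact absurd hc (H.loopless.irrefl _)

@[simp]
theorem lexProdSection_apply (c : V → W) (x : V) :
    lexProdSection (G := G) (H := H) c x = (x, c x) :=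
  rfl

theorem isTollSet_lexProd {D M : Set V} {p q : W} (hD : IsTollSet G D)
    (hM : ∀ x ∈ D, ∃ z ∈ M, G.Adj x z) (hpq : p ≠ q) (hnpq : ¬H.Adj p q) :
    IsTollSet (lexProd G H) (D ×ˢ {p} ∪ M ×ˢ {p, q}) := by
  classical
  rintro ⟨x, y⟩
  by_cases hx : x ∈ D
  · obtain ⟨z, hzM, hxz⟩ := hM x hx
    refine ⟨(z, p), .inr ⟨hzM, .inl rfl⟩, (z, q), .inr ⟨hzM, .inr rfl⟩, ?_⟩
    refine mem_tollInterval_of_adj_of_adj (.inl hxz.symm) (.inl hxz) (by simpa using hpq) ?_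
    rintro (h | ⟨-, h⟩)
    exacts [G.loopless.irrefl _ h, hnpq h]
  · obtain ⟨a, ha, b, hb, hxab⟩ := hD x
    have hc (z : V) (hz : z ∈ D) : Function.update (fun _ => p) x y z = p :=
      Function.update_of_ne (ne_of_mem_of_not_mem hz hx) _ _
    let σ : G ↪g lexProd G H := lexProdSection (Function.update (fun _ => p) x y)
    refine ⟨σ a, .inl ⟨ha, hc a ha⟩, σ b, .inl ⟨hb, hc b hb⟩, ?_⟩
    exact σ.image_tollInterval_subset a b ⟨x, hxab, by simp [σ]⟩

theorem tollNumber_lexProd_le {D M : Set V} (hD : IsTollSet G D) (hDf : D.Finite)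
    (hMf : M.Finite) (hM : ∀ x ∈ D, ∃ z ∈ M, G.Adj x z) (hH : H ≠ ⊤) :
    tollNumber (lexProd G H) ≤ D.ncard + 2 * M.ncard := by
  obtain ⟨p, q, hpq, hnpq⟩ := ne_top_iff_exists_not_adj.mp hH
  calc tollNumber (lexProd G H) ≤ (D ×ˢ {p} ∪ M ×ˢ {p, q}).ncard :=
        tollNumber_le_ncard ((hDf.prod (Set.finite_singleton p)).union
          (hMf.prod (Set.toFinite {p, q}))) (isTollSet_lexProd hD hM hpq hnpq)
    _ ≤ (D ×ˢ {p}).ncard + (M ×ˢ {p, q}).ncard := Set.ncard_union_le _ _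
    _ = D.ncard + 2 * M.ncard := by
      rw [Set.ncard_prod, Set.ncard_prod, Set.ncard_singleton, Set.ncard_pair hpq]; ring

end SimpleGraph

theorem stmt14_general {V W : Type*} [Fintype V] [Nontrivial V]
    (G : SimpleGraph V) (H : SimpleGraph W)
    (hGc : G.Connected) (hH : H ≠ ⊤)
    (heq : tollNumber (lexProd G H) = 3 * tollNumber G) :
    ∀ D : Set V, IsTollSet G D → D.ncard = tollNumber G →
      ∀ u ∈ D, ∀ v ∈ D, u ≠ v → G.neighborSet u ∩ G.neighborSet v = ∅ := by
  intro D hD hDcard u hu v hv huv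
  by_contra hne
  obtain ⟨w, hwu, hwv⟩ := Set.nonempty_iff_ne_empty.mpr hne
  choose nb hnb using hGc.preconnected.exists_adj_of_nontrivial
  let M := insert w (nb '' (D \ {u, v}))
  have hM : ∀ x ∈ D, ∃ z ∈ M, G.Adj x z := by
    intro x hx
    by_cases hxuv : x = u ∨ x = v
    · rcases hxuv with rfl | rfl
      exacts [⟨w, .inl rfl, hwu⟩, ⟨w, .inl rfl, hwv⟩]
    · exact ⟨nb x, .inr ⟨x, ⟨hx, by simpa using hxuv⟩, rfl⟩, hnb x⟩
  have hMcard : M.ncard + 1 ≤ D.ncard := by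
    have huvD : {u, v} ⊆ D := Set.insert_subset_iff.mpr ⟨hu, Set.singleton_subset_iff.mpr hv⟩
    have hinsert : M.ncard ≤ (nb '' (D \ {u, v})).ncard + 1 := Set.ncard_insert_le _ _
    have himage := Set.ncard_image_le (f := nb) (D \ {u, v}).toFinite
    have hsdiff := Set.ncard_sdiff huvD
    have hpair := Set.ncard_le_ncard huvD
    rw [Set.ncard_pair huv] at hsdiff hpair
    omega
  have hle := tollNumber_lexProd_le (H := H) hD D.toFinite M.toFinite hM hH
  omega

theorem stmt14 {V W : Type*} [Fintype V] [Fintype W] [Nontrivial V] [Nontrivial W]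
    (G : SimpleGraph V) (H : SimpleGraph W)
    (hGc : G.Connected) (hHc : H.Connected) (hH : H ≠ ⊤)
    (heq : tollNumber (lexProd G H) = 3 * tollNumber G) :
    ∀ D : Set V, IsTollSet G D → D.ncard = tollNumber G →
      ∀ u ∈ D, ∀ v ∈ D, u ≠ v → G.neighborSet u ∩ G.neighborSet v = ∅ :=
  stmt14_general G H hGc hH heq
end
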